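/- arXiv:2602.07145 — 2 statements merged into one kernel-verified Lean document; each statement's English description precedes it below -/
import Mathlib

section
/- For any real sequence (x_t)_{t=1}^T and positive reals (η_t)_{t=1}^T with x_T = 0, the identity (Σ_{t=1}^T x_t)/(Σ_{t=1}^T η_t) + Σ_{k=1}^{T-1} [η_k / (Σ_{t=k+1}^T η_t · Σ_{t=k}^T η_t)] · Σ_{t=k}^T x_t = Σ_{t=1}^{T-1} x_t / (Σ_{k=t+1}^T η_k) holds. -/
/-- For any real sequence `(x_t)_{t=1}^T` and positive reals `(η_t)_{t=1}^T` with `x_T = 0`,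
`(Σ_{t=1}^T x_t)/(Σ_{t=1}^T η_t)
 + Σ_{k=1}^{T-1} [η_k / (Σ_{t=k+1}^T η_t · Σ_{t=k}^T η_t)] · Σ_{t=k}^T x_t
 = Σ_{t=1}^{T-1} x_t / (Σ_{k=t+1}^T η_k)`. -/
theorem stmt_5 (T : ℕ) (hT : 2 ≤ T) (η x : ℕ → ℝ)
    (hη : ∀ t ∈ Finset.Icc 1 T, 0 < η t) (hxT : x T = 0) :
    (∑ t ∈ Finset.Icc 1 T, x t) / (∑ t ∈ Finset.Icc 1 T, η t) +
      ∑ k ∈ Finset.Icc 1 (T - 1),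
        (η k / ((∑ t ∈ Finset.Icc (k + 1) T, η t) * (∑ t ∈ Finset.Icc k T, η t))) *
          (∑ t ∈ Finset.Icc k T, x t) =
    ∑ t ∈ Finset.Icc 1 (T - 1), x t / (∑ k ∈ Finset.Icc (t + 1) T, η k) := by
  set S : ℕ → ℝ := fun k => ∑ t ∈ Finset.Icc k T, η t with hS
  set X : ℕ → ℝ := fun k => ∑ t ∈ Finset.Icc k T, x t with hX
  set f : ℕ → ℝ := fun k => X k / S k with hf
  have hSpos : ∀ k, 1 ≤ k → k ≤ T → 0 < S k := by
    intro k hk1 hkT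
    apply Finset.sum_pos
    · intro t ht
      exact hη t (Finset.mem_Icc.mpr ⟨le_trans hk1 (Finset.mem_Icc.mp ht).1,
        (Finset.mem_Icc.mp ht).2⟩)
    · exact ⟨k, Finset.mem_Icc.mpr ⟨le_refl k, hkT⟩⟩
  have hsplitS : ∀ k, 1 ≤ k → k ≤ T → S k = η k + S (k + 1) := by
    intro k _ hkT
    have h : Finset.Icc k T = insert k (Finset.Icc (k + 1) T) := by
      ext a; simp only [Finset.mem_Icc, Finset.mem_insert]; omega
    show (∑ t ∈ Finset.Icc k T, η t) = η k + ∑ t ∈ Finset.Icc (k + 1) T, η t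
    rw [h, Finset.sum_insert (by simp [Finset.mem_Icc])]
  have hsplitX : ∀ k, 1 ≤ k → k ≤ T → X k = x k + X (k + 1) := by
    intro k _ hkT
    have h : Finset.Icc k T = insert k (Finset.Icc (k + 1) T) := by
      ext a; simp only [Finset.mem_Icc, Finset.mem_insert]; omega
    show (∑ t ∈ Finset.Icc k T, x t) = x k + ∑ t ∈ Finset.Icc (k + 1) T, x t
    rw [h, Finset.sum_insert (by simp [Finset.mem_Icc])]
  have hfT : f T = 0 := by
    simp [hf, hX, Finset.Icc_self, hxT]
  -- pointwise identity on Icc 1 (T-1)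
  have key : ∀ k ∈ Finset.Icc 1 (T - 1),
      (η k / (S (k + 1) * S k)) * X k = x k / S (k + 1) + (f (k + 1) - f k) := by
    intro k hk
    obtain ⟨hk1, hk2⟩ := Finset.mem_Icc.mp hk
    have hkT : k ≤ T := le_trans hk2 (Nat.sub_le T 1)
    have hkT' : k + 1 ≤ T := by omega
    have hb : 0 < S (k + 1) := hSpos _ (by omega) hkT'
    have ha : 0 < η k := hη k (Finset.mem_Icc.mpr ⟨hk1, hkT⟩)
    have hSk : S k = η k + S (k + 1) := hsplitS k hk1 hkT
    have hXk : X k = x k + X (k + 1) := hsplitX k hk1 hkT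
    have hc : 0 < S k := hSpos _ hk1 hkT
    simp only [hf]
    rw [hXk]
    field_simp
    rw [hSk]
    ring
  rw [Finset.sum_congr rfl key, Finset.sum_add_distrib]
  have htel : ∑ k ∈ Finset.Icc 1 (T - 1), (f (k + 1) - f k) = f T - f 1 := by
    have hicc : Finset.Icc 1 (T - 1) = Finset.Ico 1 T := by
      ext a; simp only [Finset.mem_Icc, Finset.mem_Ico]; omega
    rw [hicc, Finset.sum_Ico_eq_sum_range]
    have h2 : ∀ i, 1 + i + 1 = (i + 1) + 1 := by intro i; omega
    calc ∑ i ∈ Finset.range (T - 1), (f (1 + i + 1) - f (1 + i))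
        = ∑ i ∈ Finset.range (T - 1), (f ((i + 1) + 1) - f (i + 1)) := by
          refine Finset.sum_congr rfl fun i _ => ?_
          rw [h2 i, Nat.add_comm 1 i]
      _ = f (T - 1 + 1) - f (0 + 1) := Finset.sum_range_sub (fun i => f (i + 1)) (T - 1)
      _ = f T - f 1 := by rw [show T - 1 + 1 = T by omega]
  rw [htel, hfT]
  have : f 1 = X 1 / S 1 := rfl
  simp only [hf, hS, hX]
  ring
end

section
/- For the linear decay schedule η_t = η(1 - t/T), the continuous last-iterate SGD loss bound evaluates to L_* + D²/(ηT) + (ηG²/3)(3 + 2 ln T/T - 2/T), which is at most L_* + D²/(ηT) + ηG²·(1 + o(1)) as T → ∞; in particular the bound is L_* + D²/(ηT) + ηG²(1 + ε) for T large enough. -/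
open Filter Topology Real

/-! With `A(k) = η(T-k)²/(2T)` and `B(k) = η²(T-k)³/(3T²)`, the penalty integrand
`η_k B(k-1)/(A(k)A(k-1))` collapses to `4η/(3T) · (1 + 1/(T-k))`, whose integral over `[0, T-1]`
is `4η/(3T) · (T - 1 + log T)`. The remaining terms are rational in `T`,
and the factor `(3 + 2 log T/T - 2/T)/3` in front of `ηG²` tends to `1` because `log T / T → 0`. -/

lemma linearDecay_penalty_integrand_eq {η T k : ℝ} (hη : η ≠ 0) (hT : T ≠ 0)
    (hk : T - k ≠ 0) :
    η * (1 - k / T) * (η ^ 2 * (T - (k - 1)) ^ 3 / (3 * T ^ 2)) /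
        (η * (T - k) ^ 2 / (2 * T) * (η * (T - (k - 1)) ^ 2 / (2 * T))) =
      4 * η / (3 * T) * (1 + (T - k)⁻¹) := by
  field_simp
  ring

lemma integral_one_add_inv_sub {T : ℝ} (hT : 1 < T) :
    ∫ k in (0 : ℝ)..(T - 1), (1 + (T - k)⁻¹) = T - 1 + log T := by
  have hinv : ∫ k in (0 : ℝ)..(T - 1), (T - k)⁻¹ = log T := by
    rw [intervalIntegral.integral_comp_sub_left (fun x => x⁻¹), sub_sub_cancel, sub_zero,
      integral_inv_of_pos one_pos (by linarith), div_one]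
  have hint : IntervalIntegrable (fun k => (T - k)⁻¹) MeasureTheory.volume 0 (T - 1) := by
    refine ContinuousOn.intervalIntegrable (ContinuousOn.inv₀ (by fun_prop) fun k hk => ?_)
    rw [Set.uIcc_of_le (by linarith)] at hk
    linarith [hk.2]
  rw [intervalIntegral.integral_add intervalIntegrable_const hint, hinv]
  simp

lemma integral_linearDecay_penalty {η T : ℝ} (hη : η ≠ 0) (hT : 1 < T) :
    ∫ k in (0 : ℝ)..(T - 1), η * (1 - k / T) * (η ^ 2 * (T - (k - 1)) ^ 3 / (3 * T ^ 2)) /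
        (η * (T - k) ^ 2 / (2 * T) * (η * (T - (k - 1)) ^ 2 / (2 * T))) =
      4 * η / (3 * T) * (T - 1 + log T) := by
  rw [← integral_one_add_inv_sub hT, ← intervalIntegral.integral_const_mul]
  refine intervalIntegral.integral_congr fun k hk => ?_
  rw [Set.uIcc_of_le (by linarith)] at hk
  exact linearDecay_penalty_integrand_eq hη (by linarith) (by linarith [hk.2])

lemma tendsto_linearDecay_factor :
    Tendsto (fun T : ℝ => (3 + 2 * log T / T - 2 / T) / 3) atTop (𝓝 1) := by
  have hlog : Tendsto (fun T : ℝ => 2 * (log T / T)) atTop (𝓝 (2 * 0)) :=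
    (isLittleO_log_id_atTop.tendsto_div_nhds_zero).const_mul 2
  have hinv : Tendsto (fun T : ℝ => 2 / T) atTop (𝓝 0) :=
    tendsto_const_nhds.div_atTop tendsto_id
  convert ((tendsto_const_nhds (x := (3 : ℝ))).add hlog |>.sub hinv).div_const 3 using 2
  · ring
  · norm_num

theorem stmt_9_general (η D G Lstar : ℝ) (hη : 0 < η)
    (A B : ℝ → ℝ → ℝ)
    (hA : ∀ T k, A T k = η * (T - k) ^ 2 / (2 * T))
    (hB : ∀ T k, B T k = η ^ 2 * (T - k) ^ 3 / (3 * T ^ 2))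
    (bound : ℝ → ℝ)
    (hbound : ∀ T, bound T =
      Lstar + D ^ 2 / (2 * A T 0) + G ^ 2 * B T 0 / (2 * A T 0) +
        G ^ 2 / 2 *
          ∫ k in (0:ℝ)..(T - 1), η * (1 - k / T) * B T (k - 1) / (A T k * A T (k - 1))) :
    (∀ T : ℝ, 1 < T →
      bound T = Lstar + D ^ 2 / (η * T) +
        η * G ^ 2 / 3 * (3 + 2 * Real.log T / T - 2 / T)) ∧
    ∀ ε : ℝ, 0 < ε → ∀ᶠ T in atTop,
      bound T ≤ Lstar + D ^ 2 / (η * T) + η * G ^ 2 * (1 + ε) := by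
  have hbound_eq : ∀ T : ℝ, 1 < T → bound T = Lstar + D ^ 2 / (η * T) +
      η * G ^ 2 / 3 * (3 + 2 * Real.log T / T - 2 / T) := fun T hT => by
    simp only [hbound, hA, hB, integral_linearDecay_penalty hη.ne' hT]
    have hT0 : T ≠ 0 := by linarith
    field_simp
    ring
  refine ⟨hbound_eq, fun ε hε => ?_⟩
  filter_upwards [eventually_gt_atTop 1,
    tendsto_linearDecay_factor.eventually (gt_mem_nhds (lt_add_of_pos_right 1 hε))]
    with T hT hfactor
  have hscale : 0 ≤ η * G ^ 2 := by positivity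
  rw [hbound_eq T hT]
  linarith [mul_le_mul_of_nonneg_left hfactor.le hscale]

/-- For the linear decay schedule `η_t = η(1 - t/T)`, the continuous last-iterate SGD loss bound
(with tail integrals `A(k) = η(T-k)²/(2T)`, `B(k) = η²(T-k)³/(3T²)` and the adjacent-index
penalty integrand `η_k B(k-1)/(A(k)A(k-1))`) evaluates to
`L_* + D²/(ηT) + (ηG²/3)(3 + 2 ln T/T - 2/T)`; in particular, for every `ε > 0` this bound is
at most `L_* + D²/(ηT) + ηG²(1 + ε)` for all sufficiently large `T`. -/
theorem stmt_9 (η D G Lstar : ℝ) (hη : 0 < η) (hD : 0 < D) (hG : 0 < G)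
    (A B : ℝ → ℝ → ℝ)
    (hA : ∀ T k, A T k = η * (T - k) ^ 2 / (2 * T))
    (hB : ∀ T k, B T k = η ^ 2 * (T - k) ^ 3 / (3 * T ^ 2))
    (bound : ℝ → ℝ)
    (hbound : ∀ T, bound T =
      Lstar + D ^ 2 / (2 * A T 0) + G ^ 2 * B T 0 / (2 * A T 0) +
        G ^ 2 / 2 *
          ∫ k in (0:ℝ)..(T - 1), η * (1 - k / T) * B T (k - 1) / (A T k * A T (k - 1))) :
    (∀ T : ℝ, 1 < T →
      bound T = Lstar + D ^ 2 / (η * T) +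
        η * G ^ 2 / 3 * (3 + 2 * Real.log T / T - 2 / T)) ∧
    ∀ ε : ℝ, 0 < ε → ∀ᶠ T in atTop,
      bound T ≤ Lstar + D ^ 2 / (η * T) + η * G ^ 2 * (1 + ε) :=
  stmt_9_general η D G Lstar hη A B hA hB bound hbound
end
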